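/- arXiv:2412.13584 — 2 statements merged into one kernel-verified Lean document; each statement's English description precedes it below -/
import Mathlib

section
/- Suppose λ is a singular strong limit cardinal and Hajnal's lemma holds: for every two infinitely chromatic graphs G, H, every subgraph of G of size less than Chr(H) has chromatic number at most Chr(G × H). Suppose further that the compactness principle holds: for every graph G of size λ⁺ and every cardinal μ, if every subgraph of G of size less than λ has chromatic number ≤ μ, then Chr(G) ≤ μ^{cf(λ)}. Then for every two graphs G₀, G₁ of size λ⁺ with min(Chr(G₀), Chr(G₁)) ≥ λ, one has Chr(G₀ × G₁) ≥ λ. -/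
universe u

/-- The product (tensor/categorical) graph: pairs are adjacent iff both coordinates are. -/
def gprod {V W : Type u} (G : SimpleGraph V) (H : SimpleGraph W) : SimpleGraph (V × W) where
  Adj p q := G.Adj p.1 q.1 ∧ H.Adj p.2 q.2
  symm := ⟨fun _ _ h => ⟨h.1.symm, h.2.symm⟩⟩
  loopless := ⟨fun p h => G.loopless.irrefl p.1 h.1⟩

/-- The (cardinal) chromatic number: the least cardinal `μ` such that there is a good
coloring of `G` into a set of size `μ`. -/
noncomputable def Chr {V : Type u} (G : SimpleGraph V) : Cardinal.{u} :=
  sInf {μ : Cardinal.{u} | ∃ c : V → μ.ord.ToType, ∀ v w, G.Adj v w → c v ≠ c w}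

/-!
Suppose `μ := Chr (G × H) < λ`. By Hajnal's lemma every subgraph of `G` of size `< λ ≤ Chr H`
has chromatic number at most `μ`, so compactness gives `Chr G ≤ μ ^ cf λ`. Since `λ` is a strong
limit and `cf λ < λ`, we have `μ ^ cf λ ≤ 2 ^ (μ * cf λ) < λ`, contradicting `λ ≤ Chr G`.
-/

namespace Cardinal

theorem IsStrongPrelimit.power_lt {c a b : Cardinal.{u}} (hc : IsStrongPrelimit c)
    (hc₀ : ℵ₀ ≤ c) (ha : a < c) (hb : b < c) : a ^ b < c :=
  calc a ^ b ≤ (2 ^ a) ^ b := power_le_power_right (cantor a).le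
    _ = 2 ^ (a * b) := (power_mul ..).symm
    _ < c := hc (mul_lt_of_lt hc₀ ha hb)

end Cardinal

/-- If `λ` is a singular strong limit cardinal, Hajnal's lemma holds, and the
compactness principle for chromatic numbers holds at `λ⁺`, then any two graphs of size `λ⁺`
both of chromatic number at least `λ` have product of chromatic number at least `λ`. -/
theorem stmt_13 (lam : Cardinal.{u}) (hinf : Cardinal.aleph0 ≤ lam)
    (hsing : lam.ord.cof < lam)
    (hsl : ∀ μ : Cardinal.{u}, μ < lam → (2 : Cardinal.{u}) ^ μ < lam)
    (hajnal : ∀ (V W : Type u) (G : SimpleGraph V) (H : SimpleGraph W),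
      Cardinal.aleph0 ≤ Chr G → Cardinal.aleph0 ≤ Chr H →
        ∀ S : Set V, Cardinal.mk S < Chr H →
          Chr (SimpleGraph.induce S G) ≤ Chr (gprod G H))
    (hcompact : ∀ (V : Type u) (G : SimpleGraph V) (μ : Cardinal.{u}),
      Cardinal.mk V = Order.succ lam →
        (∀ S : Set V, Cardinal.mk S < lam → Chr (SimpleGraph.induce S G) ≤ μ) →
          Chr G ≤ μ ^ lam.ord.cof) :
    ∀ (V W : Type u) (G : SimpleGraph V) (H : SimpleGraph W),
      Cardinal.mk V = Order.succ lam → Cardinal.mk W = Order.succ lam →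
        lam ≤ min (Chr G) (Chr H) → lam ≤ Chr (gprod G H) := by
  intro V W G H hV _ hmin
  by_contra! hprod
  obtain ⟨hG, hH⟩ := le_min_iff.mp hmin
  have hsmall (S : Set V) (hS : Cardinal.mk S < lam) :
      Chr (SimpleGraph.induce S G) ≤ Chr (gprod G H) :=
    hajnal V W G H (hinf.trans hG) (hinf.trans hH) S (hS.trans_le hH)
  have hGle : Chr G ≤ Chr (gprod G H) ^ lam.ord.cof := hcompact V G _ hV hsmall
  have hpow : Chr (gprod G H) ^ lam.ord.cof < lam :=
    Cardinal.IsStrongPrelimit.power_lt hsl hinf hprod hsing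
  exact (hG.trans hGle).not_gt hpow
end

section
/- Define on sets of ordinals the strong inclusion x ⋐ y iff x ⊆ y and |x|⁺ < otp(|sup(x)| ∩ y) (order type of the intersection of y with the cardinal |sup x|). Then ⋐ is transitive on the class of bounded sets of ordinals under suitable cardinality hypotheses; specifically, for x, y ∈ 𝒜_α(α⁺) := {z ∈ 𝒫_α(α⁺) : α ∩ z is a regular cardinal and otp(z) = (otp(α ∩ z))⁺}, one has x ⋐ y iff x ⊆ y and (α_x)⁺⁺ < α_y, where α_z := otp(α ∩ z). -/
universe u

/-- The order type of a set of ordinals. -/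
noncomputable def otp (s : Set Ordinal.{u}) : Ordinal.{u + 1} :=
  Ordinal.type (α := ↥s) (Subrel ((· < ·) : Ordinal.{u} → Ordinal.{u} → Prop) (· ∈ s))

/-- Strong inclusion: `x ⋐ y` iff `x ⊆ y` and `|x|⁺ < otp(|sup x| ∩ y)`. -/
noncomputable def ssub (x y : Set Ordinal.{u}) : Prop :=
  x ⊆ y ∧ (Order.succ (Cardinal.mk x)).ord < otp {o ∈ y | o < ((sSup x).card).ord}

/-- `α_x`, the order type of `α ∩ x`. -/
noncomputable def alphaOf (α : Cardinal.{u}) (x : Set Ordinal.{u}) : Ordinal.{u + 1} :=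
  otp {o ∈ x | o < α.ord}

/-- Membership in `𝒜_α(α⁺)`: `x` is a subset of `α⁺` of size `< α` such that `α ∩ x` is
(of order type) a regular cardinal and `otp x = (α_x)⁺`. -/
noncomputable def memA (α : Cardinal.{u}) (x : Set Ordinal.{u}) : Prop :=
  x ⊆ Set.Iio (Order.succ α).ord ∧
    Cardinal.mk x < Cardinal.lift.{u + 1} α ∧
    ((alphaOf α x).card).ord = alphaOf α x ∧
    ((alphaOf α x).card).IsRegular ∧
    otp x = (Order.succ ((alphaOf α x).card)).ord

/-!
For `x ∈ 𝒜_α(α⁺)` one has `|x| = (α_x)⁺` and `|sup x| = α`, so the set `|sup x| ∩ y` in the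
definition of `x ⋐ y` is `α ∩ y`, of order type `α_y`.
-/

open Cardinal Order

lemma card_otp (s : Set Ordinal.{u}) : (otp s).card = #s :=
  Ordinal.card_type _

namespace memA

variable {α : Cardinal.{u}} {x : Set Ordinal.{u}}

lemma mk_eq (hx : memA α x) : #x = succ (alphaOf α x).card := by
  rw [← card_otp, hx.2.2.2.2, card_ord]

lemma aleph0_le (hx : memA α x) : ℵ₀ ≤ α := by
  have h : ℵ₀ < lift.{u + 1} α := calc
    ℵ₀ ≤ (alphaOf α x).card := hx.2.2.2.1.aleph0_le
    _ < succ (alphaOf α x).card := lt_succ _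
    _ = #x := hx.mk_eq.symm
    _ < lift.{u + 1} α := hx.2.1
  exact aleph0_le_lift.1 h.le

lemma exists_mem_ord_le (hx : memA α x) : ∃ b ∈ x, α.ord ≤ b := by
  -- otherwise `α ∩ x = x`, and `otp x = (α_x)⁺` would give `|α_x| = |α_x|⁺`
  by_contra! h
  have hαx : alphaOf α x = otp x := by
    rw [alphaOf, Set.sep_eq_self_iff_mem_true.2 h]
  have := congrArg Ordinal.card hαx
  rw [card_otp, hx.mk_eq] at this
  exact (lt_succ _).ne this

lemma sSup_lt (hx : memA α x) : sSup x < (succ α).ord := by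
  -- `α⁺` is regular and `x` is a subset of it of size `< α`
  refine Ordinal.sSup_lt_of_lt_cof ?_ hx.1
  rw [← Ordinal.lift_cof, (isRegular_succ hx.aleph0_le).cof_ord]
  exact hx.2.1.trans (lift_lt.2 (lt_succ α))

lemma card_sSup (hx : memA α x) : (sSup x).card = α := by
  obtain ⟨b, hbx, hαb⟩ := hx.exists_mem_ord_le
  have hbdd : BddAbove x := ⟨(succ α).ord, fun c hc => (hx.1 hc).le⟩
  refine le_antisymm (lt_succ_iff.1 (lt_ord.1 hx.sSup_lt)) ?_
  simpa using Ordinal.card_le_card (hαb.trans (le_csSup hbdd hbx))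

end memA

theorem stmt_15_general (α : Cardinal.{u})
    (x y : Set Ordinal.{u}) (hx : memA α x) :
    ssub x y ↔
      x ⊆ y ∧ (Order.succ (Order.succ ((alphaOf α x).card))).ord < alphaOf α y := by
  rw [ssub, hx.card_sSup, hx.mk_eq]
  rfl

/-- For a regular cardinal `α` and `x, y ∈ 𝒜_α(α⁺)`, the strong inclusion
`x ⋐ y` holds iff `x ⊆ y` and `(α_x)⁺⁺ < α_y`. -/
theorem stmt_15 (α : Cardinal.{u}) (hα : α.IsRegular)
    (x y : Set Ordinal.{u}) (hx : memA α x) (hy : memA α y) :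
    ssub x y ↔
      x ⊆ y ∧ (Order.succ (Order.succ ((alphaOf α x).card))).ord < alphaOf α y :=
  stmt_15_general α x y hx
end
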